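/- Consider the 6 points in ℝ⁴ with two coordinates equal to 1/2 and two equal to 1 (in all possible positions), and the 6 points with two coordinates equal to 1/2 and two equal to 0. There exists a bijection between these two 6-element sets such that every point is matched to a point at ℓ∞ distance exactly 1/2 from it. -/
import Mathlib
set_option linter.unnecessarySeqFocus false


/-- The point of `ℝ⁴` whose `i`-th and `j`-th coordinates are `a` and `b` and whose other
two coordinates are `1/2`. -/
noncomputable def pt (i j : Fin 4) (a b : ℝ) : Fin 4 → ℝ :=
  fun k => if k = i then a else if k = j then b else 1/2

/-- The 6 points of `ℝ⁴` with two coordinates `1/2` and two coordinates `1`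
(in all possible positions). -/
def A : Set (Fin 4 → ℝ) := {x | ∃ i j : Fin 4, i ≠ j ∧ x = pt i j 1 1}

/-- The 6 points of `ℝ⁴` with two coordinates `1/2` and two coordinates `0`. -/
def B : Set (Fin 4 → ℝ) := {x | ∃ i j : Fin 4, i ≠ j ∧ x = pt i j 0 0}

lemma exists_compl (i j : Fin 4) (hij : i ≠ j) :
    ∃ k l : Fin 4, k ≠ l ∧ k ≠ i ∧ k ≠ j ∧ l ≠ i ∧ l ≠ j ∧
      ∀ m : Fin 4, m = i ∨ m = j ∨ m = k ∨ m = l := by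
  revert hij; revert i j; decide

lemma mapsAB {x : Fin 4 → ℝ} (hx : x ∈ A) : (fun k => x k - 1/2) ∈ B := by
  obtain ⟨i, j, hij, rfl⟩ := hx
  obtain ⟨k, l, hkl, hki, hkj, hli, hlj, hcov⟩ := exists_compl i j hij
  refine ⟨k, l, hkl, ?_⟩
  funext m
  rcases hcov m with rfl | rfl | rfl | rfl <;>
    simp [pt, hij, hkl, hki, hkj, hli, hlj, hij.symm, hkl.symm, hki.symm, hkj.symm,
      hli.symm, hlj.symm] <;> norm_num

lemma mapsBA {x : Fin 4 → ℝ} (hx : x ∈ B) : (fun k => x k + 1/2) ∈ A := by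
  obtain ⟨i, j, hij, rfl⟩ := hx
  obtain ⟨k, l, hkl, hki, hkj, hli, hlj, hcov⟩ := exists_compl i j hij
  refine ⟨k, l, hkl, ?_⟩
  funext m
  rcases hcov m with rfl | rfl | rfl | rfl <;>
    simp [pt, hij, hkl, hki, hkj, hli, hlj, hij.symm, hkl.symm, hki.symm, hkj.symm,
      hli.symm, hlj.symm] <;> norm_num

/-- There is a bijection between the 6 points of `ℝ⁴` with two coordinates `1/2` and two
coordinates `1` and the 6 points with two coordinates `1/2` and two coordinates `0`,
matching every point to a point at `ℓ∞` distance exactly `1/2` (the metric on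
`Fin 4 → ℝ` being the sup metric). -/
theorem matching_at_distance_half :
    ∃ σ : A ≃ B, ∀ x : A, dist (x : Fin 4 → ℝ) (σ x : Fin 4 → ℝ) = 1/2 := by
  refine ⟨⟨fun x => ⟨fun k => (x : Fin 4 → ℝ) k - 1/2, mapsAB x.2⟩,
         fun x => ⟨fun k => (x : Fin 4 → ℝ) k + 1/2, mapsBA x.2⟩,
         fun x => ?_, fun x => ?_⟩, fun x => ?_⟩
  · ext k; simp
  · ext k; simp
  · apply le_antisymm
    · exact (dist_pi_le_iff (by norm_num)).2 fun k => by rw [Real.dist_eq]; ring_nf; rw [abs_of_nonneg] <;> norm_num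
    · have := dist_le_pi_dist (x : Fin 4 → ℝ) (fun k => (x : Fin 4 → ℝ) k - 1/2) 0
      rw [Real.dist_eq] at this
      calc (1:ℝ)/2 = |(x : Fin 4 → ℝ) 0 - ((x : Fin 4 → ℝ) 0 - 1/2)| := by ring_nf; rw [abs_of_nonneg] <;> norm_num
        _ ≤ _ := this
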